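/- Let B be a bi-skew brace. Then λ_{b·a} = λ_{a+b} for all a,b ∈ B, where λ_a(b) = -a + a·b. Consequently, the map λ : B → Aut(B,+) preserves both operations: λ_{a+b} = λ_b ∘ λ_a and λ_{a·b} = λ_a ∘ λ_b. -/

import Mathlib

class SkewBrace (B : Type*) extends Group B, AddGroup B where
  one_eq_zero : (1 : B) = 0
  left_compat : ∀ a b c : B, a * (b + c) = a * b - a + a * c

class BiSkewBrace (B : Type*) extends SkewBrace B where
  op_compat : ∀ a b c : B, a + b * c = (a + b) * a⁻¹ * (a + c)

namespace SkewBrace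

variable {B : Type*}

def lambda [SkewBrace B] (a b : B) : B := -a + a * b

section SkewBrace

variable [SkewBrace B]

protected theorem mul_zero (a : B) : a * (0 : B) = a := by
  have h := left_compat a (0 : B) 0
  rw [add_zero] at h
  exact sub_eq_zero.mp (right_eq_add.mp h)

protected theorem mul_neg (a b : B) : a * -b = a - a * b + a := by
  have h := left_compat a b (-b)
  rw [add_neg_cancel, SkewBrace.mul_zero] at h
  rw [← neg_add_eq_of_eq_add h, neg_sub]

theorem lambda_mul (a b c : B) : lambda (a * b) c = lambda a (lambda b c) := by
  simp only [lambda]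
  rw [left_compat, SkewBrace.mul_neg, mul_assoc]
  simp only [sub_eq_add_neg, add_assoc, neg_add_cancel_left, add_neg_cancel_left]

end SkewBrace

variable [BiSkewBrace B]

theorem lambda_add (a b c : B) : lambda (a + b) c = lambda b (lambda a c) := by
  -- `op_compat` at `c := λ_a c` collapses, since `a + λ_a c = a * c`.
  have h := BiSkewBrace.op_compat a b (lambda a c)
  rw [lambda, add_neg_cancel_left, mul_assoc, inv_mul_cancel_left] at h
  simp only [lambda, ← h, neg_add_rev, add_assoc, neg_add_cancel_left]

theorem lambda_mul_comm_eq_lambda_add (a b : B) : lambda (b * a) = lambda (a + b) := by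
  ext c
  rw [lambda_mul, lambda_add]

end SkewBrace

theorem biSkew_lambda_both_ops {B : Type*} [BiSkewBrace B] :
    (∀ a b c : B, -(b * a) + (b * a) * c = -(a + b) + (a + b) * c) ∧
    (∀ a b c : B, -(a + b) + (a + b) * c = -b + b * (-a + a * c)) ∧
    (∀ a b c : B, -(a * b) + (a * b) * c = -a + a * (-b + b * c)) :=
  ⟨fun a b c => congrFun (SkewBrace.lambda_mul_comm_eq_lambda_add a b) c,
    SkewBrace.lambda_add, SkewBrace.lambda_mul⟩
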